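/- With Γ and Sybil clusters defined as above, any directed edge (t, z) of G_s with t ∈ K_x, z ∈ K_y, and x ≠ y satisfies z = y; that is, every inter-cluster edge points to the root of the target cluster. -/

import Mathlib

/-- `p` is a directed walk from `a` to `b` in the graph with adjacency `adj`. -/
def IsWalk {V : Type*} (adj : V → V → Prop) (a b : V) (p : List V) : Prop :=
  p.head? = some a ∧ p.getLast? = some b ∧ p.Chain' adj

/-- `b` is reachable from `a`. -/
def Reaches {V : Type*} (adj : V → V → Prop) (a b : V) : Prop :=
  ∃ p, IsWalk adj a b p

/-- `u` dominates `x` (w.r.t. root `s`): every walk from `s` to `x` contains `u`. -/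
def Dom {V : Type*} (adj : V → V → Prop) (s u x : V) : Prop :=
  ∀ p, IsWalk adj s x p → u ∈ p

/-- `z` is a meeting point of `x` and `y`: two directed walks from `x` and `y` to `z`
that are vertex-disjoint except for the common endpoint `z`. -/
def MeetPoint {V : Type*} (adj : V → V → Prop) (x y z : V) : Prop :=
  ∃ p q, IsWalk adj x z p ∧ IsWalk adj y z q ∧ ∀ w, w ∈ p → w ∈ q → w = z

/-- The smallest set of vertices containing `s`, the out-neighbors of `s` and `Γ₀`,
closed under adding meeting points of members (graphical non-Sybil agents). -/
inductive Gamma {V : Type*} (adj : V → V → Prop) (s : V) (Γ0 : Set V) : V → Prop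
  | base (x : V) : (x = s ∨ adj s x ∨ x ∈ Γ0) → Gamma adj s Γ0 x
  | meet (x y z : V) : Gamma adj s Γ0 x → Gamma adj s Γ0 y → MeetPoint adj x y z →
      Gamma adj s Γ0 z

/-- The Sybil cluster of `x`: vertices `t` admitting a walk from `x` to `t`
containing no vertex of `Γ` other than `x`. -/
def Cluster {V : Type*} (adj : V → V → Prop) (s : V) (Γ0 : Set V) (x t : V) : Prop :=
  ∃ p, IsWalk adj x t p ∧ ∀ w ∈ p, Gamma adj s Γ0 w → w = x

section Walks

variable {V : Type*} {adj : V → V → Prop}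

lemma IsWalk.concat {a b c : V} {p : List V} (h : IsWalk adj a b p) (hbc : adj b c) :
    IsWalk adj a c (p ++ [c]) := by
  obtain ⟨hhead, hlast, hchain⟩ := h
  refine ⟨?_, List.getLast?_concat, List.isChain_append.mpr ⟨hchain, List.isChain_singleton _, ?_⟩⟩
  · cases p with
    | nil => simp at hhead
    | cons d l => simpa using hhead
  · simp only [hlast, Option.mem_def, Option.some.injEq, List.head?_cons]
    rintro _ rfl _ rfl
    exact hbc

lemma IsWalk.prefix {a b c : V} {p₁ p₂ : List V} (h : IsWalk adj a b (p₁ ++ c :: p₂)) :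
    IsWalk adj a c (p₁ ++ [c]) := by
  obtain ⟨hhead, -, hchain⟩ := h
  refine ⟨?_, List.getLast?_concat, ?_⟩
  · cases p₁ <;> simpa using hhead
  · rw [← List.singleton_append, ← List.append_assoc] at hchain
    exact hchain.left_of_append

lemma IsWalk.mem_of_last {a b : V} {p : List V} (h : IsWalk adj a b p) : b ∈ p :=
  List.mem_of_getLast? h.2.1

/-- The first vertex of `p` lying on `q` is a meeting point of the two starting vertices. -/
lemma IsWalk.exists_meetPoint {x y z : V} {p q : List V} (hp : IsWalk adj x z p)
    (hq : IsWalk adj y z q) : ∃ w ∈ p, w ∈ q ∧ MeetPoint adj x y w := by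
  classical
  obtain ⟨w, hw⟩ : ∃ w, p.find? (· ∈ q) = some w :=
    Option.isSome_iff_exists.mp
      (List.find?_isSome.mpr ⟨z, hp.mem_of_last, by simpa using hq.mem_of_last⟩)
  obtain ⟨hwq, p₁, p₂, rfl, hp₁⟩ := List.find?_eq_some_iff_append.mp hw
  obtain ⟨q₁, q₂, rfl⟩ := List.append_of_mem (by simpa using hwq)
  refine ⟨w, by simp, by simp, p₁ ++ [w], q₁ ++ [w], hp.prefix, hq.prefix, fun v hv hv' => ?_⟩
  rcases List.mem_append.mp hv with hv | hv
  · have hvq : v ∉ q₁ ++ w :: q₂ := by simpa using hp₁ v hv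
    simp only [List.mem_append, List.mem_cons] at hv' hvq
    tauto
  · exact List.mem_singleton.mp hv

end Walks

section Clusters

variable {V : Type*} {adj : V → V → Prop} {s : V} {Γ0 : Set V} {x y t z : V}

lemma Cluster.eq_root_of_gamma (ht : Cluster adj s Γ0 x t) (htΓ : Gamma adj s Γ0 t) : t = x :=
  let ⟨_, hp, hpΓ⟩ := ht
  hpΓ t hp.mem_of_last htΓ

lemma Cluster.of_adj (ht : Cluster adj s Γ0 x t) (hzΓ : ¬ Gamma adj s Γ0 z) (htz : adj t z) :
    Cluster adj s Γ0 x z := by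
  obtain ⟨p, hp, hpΓ⟩ := ht
  refine ⟨p ++ [z], hp.concat htz, fun w hw hwΓ => ?_⟩
  rcases List.mem_append.mp hw with hw | hw
  · exact hpΓ w hw hwΓ
  · exact absurd (List.mem_singleton.mp hw ▸ hwΓ) hzΓ

/-- Walks from `x` and `y` into a common vertex meet at a point of `Γ`, which both walks
may only contain as their root. -/
lemma Cluster.root_unique (hx : Gamma adj s Γ0 x) (hy : Gamma adj s Γ0 y)
    (hxz : Cluster adj s Γ0 x z) (hyz : Cluster adj s Γ0 y z) : x = y := by
  obtain ⟨p, hp, hpΓ⟩ := hxz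
  obtain ⟨q, hq, hqΓ⟩ := hyz
  obtain ⟨w, hwp, hwq, hmeet⟩ := hp.exists_meetPoint hq
  have hwΓ : Gamma adj s Γ0 w := .meet x y w hx hy hmeet
  exact (hpΓ w hwp hwΓ).symm.trans (hqΓ w hwq hwΓ)

end Clusters

theorem stmt5_general {V : Type*} (adj : V → V → Prop) (s : V) (Γ0 : Set V) :
    ∀ t z x y : V, Gamma adj s Γ0 x → Gamma adj s Γ0 y →
      Cluster adj s Γ0 x t → Cluster adj s Γ0 y z →
      adj t z → x ≠ y → z = y := by
  intro t z x y hx hy hxt hyz htz hxy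
  by_contra hzy
  have hzΓ : ¬ Gamma adj s Γ0 z := fun hzΓ => hzy (hyz.eq_root_of_gamma hzΓ)
  exact hxy (Cluster.root_unique hx hy (hxt.of_adj hzΓ htz) hyz)

/-- Every inter-cluster edge points to the root of the target cluster: if
`(t, z)` is an edge with `t ∈ K_x`, `z ∈ K_y` and `x ≠ y`, then `z = y`. -/
theorem stmt5 {V : Type*} [Fintype V] (adj : V → V → Prop) (s : V) (Γ0 : Set V)
    (hreach : ∀ x : V, Reaches adj s x) :
    ∀ t z x y : V, Gamma adj s Γ0 x → Gamma adj s Γ0 y →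
      Cluster adj s Γ0 x t → Cluster adj s Γ0 y z →
      adj t z → x ≠ y → z = y :=
  stmt5_general adj s Γ0
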